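/- Let n ≥ 3 and let p, q be integers with 2 ≤ p < q ≤ n. Let i_p, i_q be integers with 1 ≤ i_p < p and 1 ≤ i_q < q, and suppose i_p ≤ q - i_q ≤ p. Then in S_n the following exchange law holds: t_q^{i_q} · t_p^{i_p} = t_{i_q}^{p+i_q-q} · t_{i_q+i_p}^{q-p} · t_q^{i_q+i_p}. -/

import Mathlib

/-! On the values `{0, …, m - 1}`, `t_m ^ k` (for `k ≤ m`) is the rotation `x ↦ x - k mod m`,
and it fixes everything above. Both sides of the exchange law are therefore explicit
piecewise-linear maps of `x`, and they agree on each of the five intervals cut out by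
`p + i_q - q ≤ i_q ≤ i_q + i_p ≤ q`. -/

/- We work in the symmetric group on `Fin n` (representing `{1, ..., n}` via `i ↦ i - 1`).
The paper multiplies permutations left-to-right: `(π₁ · π₂)(i) = π₂(π₁(i))`,
while Mathlib's `*` on `Equiv.Perm` is function composition: `(π₁ * π₂)(i) = π₁(π₂(i))`.
Hence a paper product `A · B · C` is rendered below as `C * B * A`. -/

/-- `sP n i` is the transposition `sᵢ = (i, i+1)` (1-indexed), for `1 ≤ i ≤ n - 1`. -/
def sP (n i : ℕ) : Equiv.Perm (Fin n) :=
  if h : 1 ≤ i ∧ i < n then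
    Equiv.swap ⟨i - 1, lt_of_le_of_lt (Nat.sub_le i 1) h.2⟩ ⟨i, h.2⟩
  else 1

/-- `tP n m` is `t_m = s₁ · s₂ ⋯ s_{m-1}` (paper's left-to-right product, so here the
factor for larger index is multiplied on the left).  `tP n 0 = tP n 1 = 1`. -/
def tP (n m : ℕ) : Equiv.Perm (Fin n) :=
  (List.range (m - 1)).foldl (fun g j => sP n (j + 1) * g) 1

/-- `uP n r` is `u_{2r} = t_{2r-2} · s_{2r-1}` (paper order; here reversed). -/
def uP (n r : ℕ) : Equiv.Perm (Fin n) := sP n (2 * r - 1) * tP n (2 * r - 2)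

/-- `vP n r` is `v_{2r} = t_{2r}²`. -/
def vP (n r : ℕ) : Equiv.Perm (Fin n) := (tP n (2 * r)) ^ 2

/-- Meant for `k ≤ m`; see `tP_pow_apply_val`. -/
def rotateDown (m k x : ℕ) : ℕ :=
  if x < m then (if x < k then x + m - k else x - k) else x

lemma rotateDown_one_rotateDown {m k : ℕ} (hk : k < m) (x : ℕ) :
    rotateDown m 1 (rotateDown m k x) = rotateDown m (k + 1) x := by
  unfold rotateDown
  split_ifs <;> omega

lemma sP_apply_val {n i : ℕ} (h1 : 1 ≤ i) (h2 : i < n) (x : Fin n) :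
    (sP n i x).val = if x.val = i - 1 then i else if x.val = i then i - 1 else x.val := by
  rw [sP, dif_pos ⟨h1, h2⟩, Equiv.swap_apply_def]
  simp only [Fin.ext_iff]
  split_ifs <;> simp_all

lemma tP_succ (n : ℕ) {m : ℕ} (hm : 1 ≤ m) : tP n (m + 1) = sP n m * tP n m := by
  obtain ⟨k, rfl⟩ : ∃ k, m = k + 1 := ⟨m - 1, by omega⟩
  simp only [tP, Nat.add_sub_cancel, List.range_succ, List.foldl_append, List.foldl_cons,
    List.foldl_nil]

lemma tP_apply_val {n m : ℕ} (hm : m ≤ n) (x : Fin n) :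
    (tP n m x).val = rotateDown m 1 x.val := by
  induction m with
  | zero => simp [tP, rotateDown]
  | succ m ih =>
    rcases Nat.eq_zero_or_pos m with rfl | hm0
    · simp only [tP, Nat.sub_self, List.range_zero, List.foldl_nil, Equiv.Perm.one_apply,
        rotateDown]
      split_ifs <;> omega
    · rw [tP_succ n hm0, Equiv.Perm.mul_apply, sP_apply_val hm0 (by omega), ih (by omega)]
      unfold rotateDown
      split_ifs <;> omega

lemma tP_pow_apply_val {n m k : ℕ} (hm : m ≤ n) (hk : k ≤ m) (x : Fin n) :
    ((tP n m ^ k) x).val = rotateDown m k x.val := by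
  induction k with
  | zero => simp [rotateDown]
  | succ k ih =>
    rw [pow_succ', Equiv.Perm.mul_apply, tP_apply_val hm, ih (by omega),
      rotateDown_one_rotateDown (by omega)]

lemma rotateDown_exchange {p q ip iq : ℕ} (hpq : p < q) (hip : ip < p) (hiq : iq < q)
    (h1 : ip ≤ q - iq) (h2 : q - iq ≤ p) (x : ℕ) :
    rotateDown p ip (rotateDown q iq x) =
      rotateDown q (iq + ip) (rotateDown (iq + ip) (q - p) (rotateDown iq (p + iq - q) x)) := by
  obtain h | ⟨h, h'⟩ | ⟨h, h'⟩ | ⟨h, h'⟩ | h :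
      x < p + iq - q ∨ (p + iq - q ≤ x ∧ x < iq) ∨ (iq ≤ x ∧ x < iq + ip) ∨
        (iq + ip ≤ x ∧ x < q) ∨ q ≤ x := by omega
  all_goals simp (disch := omega) only [rotateDown, if_pos, if_neg] <;> omega

theorem exchange_law_case2_general (n p q ip iq : ℕ) (hpq : p < q) (hq : q ≤ n)
    (hip2 : ip < p) (hiq2 : iq < q) (h1 : ip ≤ q - iq) (h2 : q - iq ≤ p) :
    tP n p ^ ip * tP n q ^ iq =
      tP n q ^ (iq + ip) * tP n (iq + ip) ^ (q - p) * tP n iq ^ (p + iq - q) := by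
  ext x
  simp only [Equiv.Perm.mul_apply]
  rw [tP_pow_apply_val (by omega) hip2.le, tP_pow_apply_val hq (by omega),
    tP_pow_apply_val hq (by omega), tP_pow_apply_val (by omega) (by omega),
    tP_pow_apply_val (by omega) (by omega)]
  exact rotateDown_exchange hpq hip2 hiq2 h1 h2 x.val

/-- exchange law, case `i_p ≤ q - i_q ≤ p`:
`t_q^{i_q} · t_p^{i_p} = t_{i_q}^{p+i_q-q} · t_{i_q+i_p}^{q-p} · t_q^{i_q+i_p}` (paper order;
rendered here in composition order, i.e. reversed). -/
theorem exchange_law_case2 (n p q ip iq : ℕ) (hn : 3 ≤ n)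
    (hp : 2 ≤ p) (hpq : p < q) (hq : q ≤ n)
    (hip1 : 1 ≤ ip) (hip2 : ip < p) (hiq1 : 1 ≤ iq) (hiq2 : iq < q)
    (h1 : ip ≤ q - iq) (h2 : q - iq ≤ p) :
    tP n p ^ ip * tP n q ^ iq =
      tP n q ^ (iq + ip) * tP n (iq + ip) ^ (q - p) * tP n iq ^ (p + iq - q) :=
  exchange_law_case2_general n p q ip iq hpq hq hip2 hiq2 h1 h2
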